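/- Let u, v ∈ (ℝ_{≥0})^N be non-zero non-negative vectors satisfying (‖u‖₁/‖u‖_∞)(‖v‖₁/‖v‖_∞) ≥ CN with C ≥ 1. For K ≤ N/2, let (Q,R) be a uniformly random ordered pair of disjoint K-element subsets of [N]. Then for 0 < γ < 1: Pr[∑_{i∈Q}∑_{j∈R} u_i v_j ≤ e^{−γ}(K²/N²)‖u‖₁‖v‖₁] ≤ 2·exp(−γ²CK/(12N)). -/

import Mathlib

/-!
Write a = ‖u‖₁/‖u‖∞, b = ‖v‖₁/‖v‖∞ and split γ = s + t. The double sum factors as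
(∑_{i∈Q} u_i)(∑_{j∈R} v_j), so on the event either ∑_{i∈Q} u_i ≤ e^{-s} K‖u‖₁/N
or ∑_{j∈R} v_j ≤ e^{-t} K‖v‖₁/N, and each of Q, R on its own is a uniform K-subset of [N].
For a uniform K-subset the Chernoff bound holds just as for independent sampling, because by
Maclaurin's inequality the average of ∏_{i∈Q} z_i over K-subsets Q is at most (mean z)^K;
with the weights u/‖u‖∞ ∈ [0,1] this bounds the first event by exp(-(1 - (1+s)e^{-s}) K a/N).
Taking s = γ√b/(√a+√b) and t = γ√a/(√a+√b), both exponents are at least γ²CK/(12N)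
once ab ≥ CN.
-/

open scoped Classical

/-- The ℓ¹ norm of a vector. -/
noncomputable def nl1 {N : ℕ} (u : Fin N → ℝ) : ℝ := ∑ i, |u i|

/-- The ℓ∞ norm of a vector. -/
noncomputable def nlinf {N : ℕ} (u : Fin N → ℝ) : ℝ := ⨆ i, |u i|

open Finset Real

lemma pow_succ_add_mul_le_add_pow {s d : ℝ} (hs : 0 ≤ s) (hd : 0 ≤ d) (K : ℕ) :
    s ^ (K + 1) + (K + 1) * s ^ K * d ≤ (s + d) ^ (K + 1) := by
  induction K with
  | zero => simp
  | succ K ih =>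
    push_cast
    calc s ^ (K + 1 + 1) + (K + 1 + 1) * s ^ (K + 1) * d
        ≤ (s + d) * (s ^ (K + 1) + (K + 1) * s ^ K * d) := by
          have : 0 ≤ (K + 1) * s ^ K * d ^ 2 := by positivity
          linear_combination this
      _ ≤ (s + d) * (s + d) ^ (K + 1) := by gcongr
      _ = (s + d) ^ (K + 1 + 1) := by ring

/-- Here `s` is the mean of `n` entries and `s + (n + 1) * d` a further entry, so that `s + d` is
the mean of all `n + 1`. -/
lemma maclaurin_step (n K : ℕ) {s d A B : ℝ} (hs : 0 ≤ s) (hd : 0 ≤ d)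
    (hA : A ≤ n.choose (K + 1) * s ^ (K + 1)) (hB : B ≤ n.choose K * s ^ K) :
    A + (s + (n + 1) * d) * B ≤ (n + 1).choose (K + 1) * (s + d) ^ (K + 1) := by
  have pascal : ((n + 1).choose (K + 1) : ℝ) = n.choose K + n.choose (K + 1) := by
    exact_mod_cast Nat.choose_succ_succ' n K
  have absorb : ((n : ℝ) + 1) * n.choose K = (n + 1).choose (K + 1) * (K + 1) := by
    exact_mod_cast Nat.add_one_mul_choose_eq n K
  calc A + (s + (n + 1) * d) * B
      ≤ n.choose (K + 1) * s ^ (K + 1) + (s + (n + 1) * d) * (n.choose K * s ^ K) := by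
        gcongr
    _ = (n + 1).choose (K + 1) * (s ^ (K + 1) + (K + 1) * s ^ K * d) := by
        linear_combination (s ^ (K + 1)) * pascal.symm + d * s ^ K * absorb
    _ ≤ (n + 1).choose (K + 1) * (s + d) ^ (K + 1) := by
        gcongr; exact pow_succ_add_mul_le_add_pow hs hd K

lemma sum_powersetCard_succ_insert_prod {ι : Type*} [DecidableEq ι] {x : ι} {T : Finset ι}
    (hx : x ∉ T) (K : ℕ) (z : ι → ℝ) :
    ∑ Q ∈ (insert x T).powersetCard (K + 1), ∏ i ∈ Q, z i =
      ∑ Q ∈ T.powersetCard (K + 1), ∏ i ∈ Q, z i +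
        z x * ∑ Q ∈ T.powersetCard K, ∏ i ∈ Q, z i := by
  have notMem : ∀ Q ∈ T.powersetCard K, x ∉ Q :=
    fun Q hQ hxQ => hx ((mem_powersetCard.1 hQ).1 hxQ)
  rw [powersetCard_succ_insert hx, sum_union, sum_image, mul_sum]
  · exact congrArg _ (sum_congr rfl fun Q hQ => prod_insert (notMem Q hQ))
  · intro Q hQ R hR hQR
    rw [← erase_insert (notMem Q hQ), ← erase_insert (notMem R hR), hQR]
  · refine disjoint_left.2 fun Q hQ hQ' => ?_
    obtain ⟨R, -, rfl⟩ := mem_image.1 hQ'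
    exact hx ((mem_powersetCard.1 hQ).1 (mem_insert_self x R))

theorem sum_powersetCard_prod_le {ι : Type*} [DecidableEq ι] (T : Finset ι) {z : ι → ℝ}
    (hz : ∀ i ∈ T, 0 ≤ z i) (K : ℕ) :
    ∑ Q ∈ T.powersetCard K, ∏ i ∈ Q, z i ≤ T.card.choose K * ((∑ i ∈ T, z i) / T.card) ^ K := by
  induction T using Finset.strongInduction generalizing K with
  | _ T ih =>
  rcases K with _ | K
  · simp
  rcases T.eq_empty_or_nonempty with rfl | hne
  · rw [powersetCard_eq_empty.2 (by simp)]; simp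
  -- peel off a largest entry, so that the remaining mean is at most it
  obtain ⟨x, hxT, hmax⟩ := exists_max_image T z hne
  set T' := T.erase x
  have hT' : ∀ i ∈ T', 0 ≤ z i := fun i hi => hz i (mem_of_mem_erase hi)
  set n := T'.card
  set s := (∑ i ∈ T', z i) / n
  have hs : 0 ≤ s := div_nonneg (sum_nonneg hT') n.cast_nonneg
  have hsum : n * s = ∑ i ∈ T', z i := by
    rcases Nat.eq_zero_or_pos n with hn | hn
    · simp [hn, card_eq_zero.1 hn]
    · exact mul_div_cancel₀ _ (by positivity)
  have hsx : s ≤ z x := by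
    refine div_le_of_le_mul₀ n.cast_nonneg (hz x hxT) ?_
    rw [mul_comm]
    simpa using sum_le_card_nsmul T' z (z x) fun i hi => hmax i (mem_of_mem_erase hi)
  have := maclaurin_step n K hs (d := (z x - s) / (n + 1))
    (div_nonneg (by linarith) (by positivity))
    (ih T' (erase_ssubset hxT) hT' (K + 1)) (ih T' (erase_ssubset hxT) hT' K)
  rw [← insert_erase hxT, sum_powersetCard_succ_insert_prod (notMem_erase x T),
    card_insert_of_notMem (notMem_erase x T), sum_insert (notMem_erase x T)]
  convert this using 3
  · field_simp; ring
  · push_cast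
    field_simp
    rw [← hsum]; ring

lemma exp_mul_le_one_add_mul {t w : ℝ} (hw0 : 0 ≤ w) (hw1 : w ≤ 1) :
    exp (t * w) ≤ 1 + (exp t - 1) * w := by
  have := convexOn_exp.2 (Set.mem_univ 0) (Set.mem_univ t) (sub_nonneg.2 hw1) hw0 (by ring)
  simp only [smul_eq_mul, mul_zero, zero_add, exp_zero] at this
  rw [mul_comm t w]
  linarith

/-- The Chernoff exponent `δ + (1 - δ) log (1 - δ)` of the lower tail at `(1 - δ) μ`, written in
terms of `1 - δ = exp (-s)`. -/
noncomputable def lowerTailRate (s : ℝ) : ℝ := 1 - (1 + s) * exp (-s)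

section LowerTail

variable {ι : Type*} [Fintype ι] [DecidableEq ι]

lemma sum_powersetCard_exp_neg_mul_sum_le {w : ι → ℝ} (hw0 : ∀ i, 0 ≤ w i) (hw1 : ∀ i, w i ≤ 1)
    (K : ℕ) (s : ℝ) :
    ∑ Q ∈ powersetCard K univ, exp (-s * ∑ i ∈ Q, w i) ≤
      (Fintype.card ι).choose K *
        exp (-(1 - exp (-s)) * (K * (∑ i, w i) / Fintype.card ι)) := by
  set N := Fintype.card ι
  set c := 1 - exp (-s)
  have hmean : (∑ i, exp (-s * w i)) / N ≤ exp (-c * ((∑ i, w i) / N)) := by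
    have hsum : ∑ i, exp (-s * w i) ≤ N - c * ∑ i, w i := by
      calc ∑ i, exp (-s * w i) ≤ ∑ i, (1 - c * w i) :=
            sum_le_sum fun i _ => by
              linarith [exp_mul_le_one_add_mul (t := -s) (hw0 i) (hw1 i)]
        _ = N - c * ∑ i, w i := by simp [sum_sub_distrib, mul_sum, N]
    rcases Nat.eq_zero_or_pos N with hN | hN
    · simp only [hN, Nat.cast_zero, div_zero]; positivity
    calc (∑ i, exp (-s * w i)) / N ≤ (N - c * ∑ i, w i) / N := by gcongr
      _ = -c * ((∑ i, w i) / N) + 1 := by field_simp; ring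
      _ ≤ exp (-c * ((∑ i, w i) / N)) := add_one_le_exp _
  calc ∑ Q ∈ powersetCard K univ, exp (-s * ∑ i ∈ Q, w i)
      = ∑ Q ∈ powersetCard K univ, ∏ i ∈ Q, exp (-s * w i) := by simp_rw [mul_sum, exp_sum]
    _ ≤ N.choose K * ((∑ i, exp (-s * w i)) / N) ^ K := by
        simpa only [card_univ] using sum_powersetCard_prod_le univ (fun i _ => exp_nonneg _) K
    _ ≤ N.choose K * exp (-c * ((∑ i, w i) / N)) ^ K := by gcongr
    _ = N.choose K * exp (-c * (K * (∑ i, w i) / N)) := by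
        rw [← exp_nat_mul]; ring_nf

lemma card_lowerTail_le {w : ι → ℝ} (hw0 : ∀ i, 0 ≤ w i) (hw1 : ∀ i, w i ≤ 1) (K : ℕ) {s : ℝ}
    (hs : 0 ≤ s) :
    (#{Q ∈ powersetCard K univ |
        ∑ i ∈ Q, w i ≤ exp (-s) * (K * (∑ i, w i) / Fintype.card ι)} : ℝ) ≤
      (Fintype.card ι).choose K *
        exp (-lowerTailRate s * (K * (∑ i, w i) / Fintype.card ι)) := by
  set μ := K * (∑ i, w i) / Fintype.card ι
  set F := {Q ∈ powersetCard K (univ : Finset ι) | ∑ i ∈ Q, w i ≤ exp (-s) * μ}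
  have markov :
      #F * exp (-s * (exp (-s) * μ)) ≤ ∑ Q ∈ powersetCard K univ, exp (-s * ∑ i ∈ Q, w i) :=
    calc #F * exp (-s * (exp (-s) * μ)) ≤ ∑ Q ∈ F, exp (-s * ∑ i ∈ Q, w i) := by
          rw [← nsmul_eq_mul]
          refine card_nsmul_le_sum F _ _ fun Q hQ => exp_le_exp.2 ?_
          exact mul_le_mul_of_nonpos_left (mem_filter.1 hQ).2 (neg_nonpos.2 hs)
      _ ≤ ∑ Q ∈ powersetCard K univ, exp (-s * ∑ i ∈ Q, w i) :=
          sum_le_sum_of_subset_of_nonneg (filter_subset _ _) fun _ _ _ => exp_nonneg _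
  have hsplit :
      exp (-(1 - exp (-s)) * μ) = exp (-lowerTailRate s * μ) * exp (-s * (exp (-s) * μ)) := by
    rw [← exp_add, lowerTailRate]; ring_nf
  have := markov.trans (sum_powersetCard_exp_neg_mul_sum_le hw0 hw1 K s)
  rw [hsplit] at this
  exact le_of_mul_le_mul_right (this.trans_eq (mul_assoc _ _ _).symm) (exp_pos _)

lemma card_lowerTail_le_of_le {f : ι → ℝ} {M : ℝ} (hM : 0 < M) (hf0 : ∀ i, 0 ≤ f i)
    (hfM : ∀ i, f i ≤ M) (K : ℕ) {s : ℝ} (hs : 0 ≤ s) :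
    (#{Q ∈ powersetCard K univ |
        ∑ i ∈ Q, f i ≤ exp (-s) * (K * (∑ i, f i) / Fintype.card ι)} : ℝ) ≤
      (Fintype.card ι).choose K *
        exp (-lowerTailRate s * (K * ((∑ i, f i) / M) / Fintype.card ι)) := by
  have h := card_lowerTail_le (w := fun i => f i / M) (fun i => div_nonneg (hf0 i) hM.le)
    (fun i => div_le_one_of_le₀ (hfM i) hM.le) K hs
  simp only [← sum_div] at h
  convert h using 4
  rw [div_le_iff₀ hM]
  congr! 1
  field_simp

end LowerTail

lemma sq_div_two_sub_cube_div_three_le_lowerTailRate {s : ℝ} (hs : 0 ≤ s) :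
    s ^ 2 / 2 - s ^ 3 / 3 ≤ lowerTailRate s := by
  have hexp : 1 + s + s ^ 2 / 2 + s ^ 3 / 6 ≤ exp s := by
    simpa [sum_range_succ, Nat.factorial] using sum_le_exp_of_nonneg hs 4
  have hq : 0 ≤ 1 - s ^ 2 / 2 + s ^ 3 / 3 := by nlinarith [sq_nonneg (s - 1), pow_nonneg hs 3]
  have hprod : 1 + s ≤ (1 - s ^ 2 / 2 + s ^ 3 / 3) * exp s :=
    calc 1 + s ≤ (1 - s ^ 2 / 2 + s ^ 3 / 3) * (1 + s + s ^ 2 / 2 + s ^ 3 / 6) := by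
          nlinarith [pow_nonneg hs 4, pow_nonneg hs 5, pow_nonneg hs 6]
      _ ≤ (1 - s ^ 2 / 2 + s ^ 3 / 3) * exp s := by gcongr
  have : (1 + s) * exp (-s) ≤ 1 - s ^ 2 / 2 + s ^ 3 / 3 := by
    rwa [exp_neg, ← div_eq_mul_inv, div_le_iff₀ (exp_pos s)]
  rw [lowerTailRate]
  linarith

lemma sq_mul_sq_div_le_of_sq_le {N x y : ℝ} (hx : 0 < x) (hy : 0 < y) (hxN : x ^ 2 ≤ N)
    (hyN : y ^ 2 ≤ N) :
    x ^ 2 * y ^ 2 / (12 * N) ≤ ((y / (x + y)) ^ 2 / 2 - (y / (x + y)) ^ 3 / 3) * x ^ 2 := by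
  have hN : 0 < N := (by positivity : 0 < x ^ 2).trans_le hxN
  have hxy : x * y ≤ N := by nlinarith [sq_nonneg (x - y)]
  -- `(x + y) ^ 3 ≤ 2 * max x y ^ 2 * (3 * x + y)`, by cases on which of `x`, `y` is larger
  have hcube : (x + y) ^ 3 ≤ 2 * N * (3 * x + y) := by
    nlinarith [mul_nonneg (mul_nonneg hx.le hy.le) hy.le,
      mul_le_mul_of_nonneg_left hxN hy.le, mul_le_mul_of_nonneg_left hyN hy.le,
      mul_le_mul_of_nonneg_left hxN hx.le, mul_le_mul_of_nonneg_left hyN hx.le,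
      mul_le_mul_of_nonneg_left hxy hx.le]
  have hθ : (y / (x + y)) ^ 2 / 2 - (y / (x + y)) ^ 3 / 3 =
      y ^ 2 * (3 * x + y) / (6 * (x + y) ^ 3) := by
    field_simp; ring
  rw [hθ, div_mul_eq_mul_div, div_le_div_iff₀ (by positivity) (by positivity)]
  nlinarith [mul_le_mul_of_nonneg_left hcube (by positivity : (0:ℝ) ≤ x ^ 2 * y ^ 2)]

lemma le_lowerTailRate_mul_sq {N C γ x y : ℝ} (hγ0 : 0 ≤ γ) (hγ1 : γ ≤ 1) (hx : 0 < x)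
    (hy : 0 < y) (hxN : x ^ 2 ≤ N) (hyN : y ^ 2 ≤ N) (hC : C * N ≤ x ^ 2 * y ^ 2) :
    γ ^ 2 * C / 12 ≤ lowerTailRate (γ * (y / (x + y))) * x ^ 2 := by
  set θ := y / (x + y)
  have hθ0 : 0 ≤ θ := by positivity
  have hN : 0 < N := (by positivity : 0 < x ^ 2).trans_le hxN
  have hC' : C / 12 ≤ (θ ^ 2 / 2 - θ ^ 3 / 3) * x ^ 2 := by
    refine le_trans ?_ (sq_mul_sq_div_le_of_sq_le hx hy hxN hyN)
    rw [le_div_iff₀ (by positivity)]; linarith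
  have hγ3 : γ ^ 3 * θ ^ 3 ≤ γ ^ 2 * θ ^ 3 := by
    have : γ ^ 3 ≤ γ ^ 2 := pow_le_pow_of_le_one hγ0 hγ1 (by norm_num)
    exact mul_le_mul_of_nonneg_right this (by positivity)
  calc γ ^ 2 * C / 12 = γ ^ 2 * (C / 12) := by ring
    _ ≤ γ ^ 2 * ((θ ^ 2 / 2 - θ ^ 3 / 3) * x ^ 2) := by gcongr
    _ ≤ ((γ * θ) ^ 2 / 2 - (γ * θ) ^ 3 / 3) * x ^ 2 := by
        have := sq_nonneg x
        nlinarith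
    _ ≤ lowerTailRate (γ * θ) * x ^ 2 := by
        gcongr; exact sq_div_two_sub_cube_div_three_le_lowerTailRate (by positivity)

lemma exists_add_eq_le_lowerTailRate_mul {N C γ a b : ℝ} (hγ0 : 0 ≤ γ) (hγ1 : γ ≤ 1)
    (ha : 0 < a) (hb : 0 < b) (haN : a ≤ N) (hbN : b ≤ N) (hab : C * N ≤ a * b) :
    ∃ s t, 0 ≤ s ∧ 0 ≤ t ∧ s + t = γ ∧
      γ ^ 2 * C / 12 ≤ lowerTailRate s * a ∧ γ ^ 2 * C / 12 ≤ lowerTailRate t * b := by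
  obtain ⟨x, hx, rfl⟩ : ∃ x, 0 < x ∧ x ^ 2 = a := ⟨√a, sqrt_pos.2 ha, sq_sqrt ha.le⟩
  obtain ⟨y, hy, rfl⟩ : ∃ y, 0 < y ∧ y ^ 2 = b := ⟨√b, sqrt_pos.2 hb, sq_sqrt hb.le⟩
  refine ⟨γ * (y / (x + y)), γ * (x / (y + x)), by positivity, by positivity, ?_,
    le_lowerTailRate_mul_sq hγ0 hγ1 hx hy haN hbN hab,
    le_lowerTailRate_mul_sq hγ0 hγ1 hy hx hbN haN (by linarith)⟩
  field_simp
  ring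

section DisjointPairs

variable (ι : Type*) [Fintype ι] [DecidableEq ι]

def disjointPairs (K : ℕ) : Finset (Finset ι × Finset ι) :=
  {p ∈ powersetCard K univ ×ˢ powersetCard K univ | Disjoint p.1 p.2}

variable {ι}

lemma card_powersetCard_filter_disjoint {K : ℕ} {Q : Finset ι} (hQ : #Q = K) :
    #{R ∈ powersetCard K (univ : Finset ι) | Disjoint Q R} = (Fintype.card ι - K).choose K := by
  have : {R ∈ powersetCard K (univ : Finset ι) | Disjoint Q R} = powersetCard K Qᶜ := by
    ext R
    simp [mem_powersetCard, subset_compl_iff_disjoint_left, and_comm]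
  rw [this, card_powersetCard, card_compl, hQ]

lemma card_disjointPairs_filter_fst (K : ℕ) (P : Finset ι → Prop) [DecidablePred P] :
    #{p ∈ disjointPairs ι K | P p.1} =
      #{Q ∈ powersetCard K univ | P Q} * (Fintype.card ι - K).choose K := by
  rw [disjointPairs, filter_filter, card_filter, sum_product, card_eq_sum_ones, sum_filter,
    sum_mul]
  refine sum_congr rfl fun Q hQ => ?_
  by_cases hP : P Q
  · simp only [hP, and_true, if_true, one_mul, ← card_filter]
    exact card_powersetCard_filter_disjoint (mem_powersetCard.1 hQ).2
  · simp [hP]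

lemma card_disjointPairs_filter_snd (K : ℕ) (P : Finset ι → Prop) [DecidablePred P] :
    #{p ∈ disjointPairs ι K | P p.2} = #{p ∈ disjointPairs ι K | P p.1} := by
  refine card_nbij' Prod.swap Prod.swap ?_ ?_ (fun _ _ => rfl) (fun _ _ => rfl) <;>
  · intro p
    simp [disjointPairs, disjoint_comm, and_comm]

lemma card_disjointPairs (K : ℕ) :
    #(disjointPairs ι K) = (Fintype.card ι).choose K * (Fintype.card ι - K).choose K := by
  simpa using card_disjointPairs_filter_fst K (fun _ => True)

end DisjointPairs

section Norms

variable {N : ℕ} {f : Fin N → ℝ}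

lemma nl1_eq_sum (hf : ∀ i, 0 ≤ f i) : nl1 f = ∑ i, f i :=
  sum_congr rfl fun i _ => abs_of_nonneg (hf i)

lemma abs_le_nlinf (f : Fin N → ℝ) (i : Fin N) : |f i| ≤ nlinf f :=
  le_ciSup (f := fun j => |f j|) (Set.finite_range _).bddAbove i

lemma nlinf_pos (hf : f ≠ 0) : 0 < nlinf f := by
  obtain ⟨i, hi⟩ := Function.ne_iff.1 hf
  exact (abs_pos.2 hi).trans_le (abs_le_nlinf f i)

lemma nl1_pos (hf : f ≠ 0) : 0 < nl1 f := by
  obtain ⟨i, hi⟩ := Function.ne_iff.1 hf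
  exact (abs_pos.2 hi).trans_le (single_le_sum (fun j _ => abs_nonneg (f j)) (mem_univ i))

lemma nl1_div_nlinf_le (hf : f ≠ 0) : nl1 f / nlinf f ≤ N := by
  rw [div_le_iff₀ (nlinf_pos hf), nl1]
  simpa using sum_le_card_nsmul univ (fun i => |f i|) _ fun i _ => abs_le_nlinf f i

end Norms

lemma card_disjointPairs_lowerTail_fst_le {N K : ℕ} {f : Fin N → ℝ} (hf : ∀ i, 0 ≤ f i)
    (hf0 : f ≠ 0) {s ρ : ℝ} (hs : 0 ≤ s) (hρ : ρ ≤ lowerTailRate s * (nl1 f / nlinf f)) :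
    (#{p ∈ disjointPairs (Fin N) K | ∑ i ∈ p.1, f i ≤ exp (-s) * (K * nl1 f / N)} : ℝ) ≤
      exp (-(ρ * K / N)) * #(disjointPairs (Fin N) K) := by
  have htail := card_lowerTail_le_of_le (nlinf_pos hf0) hf
    (fun i => (le_abs_self _).trans (abs_le_nlinf f i)) K hs
  rw [Fintype.card_fin, ← nl1_eq_sum hf] at htail
  have hexp : exp (-lowerTailRate s * (K * (nl1 f / nlinf f) / N)) ≤ exp (-(ρ * K / N)) := by
    rw [exp_le_exp, neg_mul, neg_le_neg_iff]
    calc ρ * K / N ≤ lowerTailRate s * (nl1 f / nlinf f) * K / N := by gcongr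
      _ = lowerTailRate s * (K * (nl1 f / nlinf f) / N) := by ring
  rw [card_disjointPairs_filter_fst K (fun Q => ∑ i ∈ Q, f i ≤ exp (-s) * (K * nl1 f / N)),
    card_disjointPairs, Fintype.card_fin]
  push_cast
  calc _ ≤ N.choose K * exp (-lowerTailRate s * (K * (nl1 f / nlinf f) / N)) *
        (N - K).choose K := by gcongr
    _ ≤ N.choose K * exp (-(ρ * K / N)) * (N - K).choose K := by gcongr
    _ = _ := by ring

lemma le_or_le_of_mul_le_exp_neg_mul {x y A B s t : ℝ} (hA : 0 ≤ A) (hB : 0 ≤ B)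
    (h : x * y ≤ exp (-(s + t)) * (A * B)) : x ≤ exp (-s) * A ∨ y ≤ exp (-t) * B := by
  by_contra! hlt
  have := mul_lt_mul'' hlt.1 hlt.2 (by positivity) (by positivity)
  rw [neg_add, exp_add] at h
  linarith

theorem stmt12_general (N K : ℕ) (C γ : ℝ) (hγ0 : 0 < γ) (hγ1 : γ < 1)
    (u v : Fin N → ℝ) (hu : ∀ i, 0 ≤ u i) (hv : ∀ i, 0 ≤ v i)
    (hu0 : u ≠ 0) (hv0 : v ≠ 0)
    (hratio : C * N ≤ (nl1 u / nlinf u) * (nl1 v / nlinf v)) :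
    let Pairs : Finset (Finset (Fin N) × Finset (Fin N)) :=
      ((Finset.powersetCard K Finset.univ) ×ˢ (Finset.powersetCard K Finset.univ)).filter
        (fun p => Disjoint p.1 p.2)
    ((Pairs.filter (fun p =>
          ∑ i ∈ p.1, ∑ j ∈ p.2, u i * v j ≤
            Real.exp (-γ) * ((K : ℝ) ^ 2 / (N : ℝ) ^ 2 * (nl1 u * nl1 v)))).card : ℝ) /
        (Pairs.card : ℝ) ≤
      2 * Real.exp (-(γ ^ 2 * C * K) / (12 * N)) := by
  intro Pairs
  obtain ⟨s, t, hs, ht, hst, hus, hvt⟩ := exists_add_eq_le_lowerTailRate_mul hγ0.le hγ1.le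
    (div_pos (nl1_pos hu0) (nlinf_pos hu0)) (div_pos (nl1_pos hv0) (nlinf_pos hv0))
    (nl1_div_nlinf_le hu0) (nl1_div_nlinf_le hv0) hratio
  set A := {p ∈ disjointPairs (Fin N) K | ∑ i ∈ p.1, u i ≤ exp (-s) * (K * nl1 u / N)}
  set B := {p ∈ disjointPairs (Fin N) K | ∑ j ∈ p.2, v j ≤ exp (-t) * (K * nl1 v / N)}
  have hsub : Pairs.filter (fun p => ∑ i ∈ p.1, ∑ j ∈ p.2, u i * v j ≤
      exp (-γ) * ((K : ℝ) ^ 2 / (N : ℝ) ^ 2 * (nl1 u * nl1 v))) ⊆ A ∪ B := by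
    intro p hp
    rw [mem_filter, ← sum_mul_sum, ← hst] at hp
    rw [mem_union, mem_filter, mem_filter]
    refine (le_or_le_of_mul_le_exp_neg_mul ?_ ?_ (hp.2.trans_eq ?_)).imp (⟨hp.1, ·⟩) (⟨hp.1, ·⟩)
    · exact div_nonneg (mul_nonneg K.cast_nonneg (nl1_pos hu0).le) N.cast_nonneg
    · exact div_nonneg (mul_nonneg K.cast_nonneg (nl1_pos hv0).le) N.cast_nonneg
    · ring
  have hA : (#A : ℝ) ≤ exp (-(γ ^ 2 * C / 12 * K / N)) * #Pairs :=
    card_disjointPairs_lowerTail_fst_le hu hu0 hs hus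
  have hB : (#B : ℝ) ≤ exp (-(γ ^ 2 * C / 12 * K / N)) * #Pairs := by
    rw [card_disjointPairs_filter_snd K (fun R => ∑ j ∈ R, v j ≤ exp (-t) * (K * nl1 v / N))]
    exact card_disjointPairs_lowerTail_fst_le hv hv0 ht hvt
  have hrate : -(γ ^ 2 * C * K) / (12 * N) = -(γ ^ 2 * C / 12 * K / N) := by ring
  refine div_le_of_le_mul₀ (Nat.cast_nonneg _) (by positivity) ?_
  calc _ ≤ (#A : ℝ) + #B := by exact_mod_cast (card_le_card hsub).trans (card_union_le _ _)
    _ ≤ _ := by rw [hrate]; linarith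

theorem stmt12 (N K : ℕ) (C γ : ℝ) (hC : 1 ≤ C) (hγ0 : 0 < γ) (hγ1 : γ < 1)
    (hK : 2 * K ≤ N)
    (u v : Fin N → ℝ) (hu : ∀ i, 0 ≤ u i) (hv : ∀ i, 0 ≤ v i)
    (hu0 : u ≠ 0) (hv0 : v ≠ 0)
    (hratio : C * N ≤ (nl1 u / nlinf u) * (nl1 v / nlinf v)) :
    let Pairs : Finset (Finset (Fin N) × Finset (Fin N)) :=
      ((Finset.powersetCard K Finset.univ) ×ˢ (Finset.powersetCard K Finset.univ)).filter
        (fun p => Disjoint p.1 p.2)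
    ((Pairs.filter (fun p =>
          ∑ i ∈ p.1, ∑ j ∈ p.2, u i * v j ≤
            Real.exp (-γ) * ((K : ℝ) ^ 2 / (N : ℝ) ^ 2 * (nl1 u * nl1 v)))).card : ℝ) /
        (Pairs.card : ℝ) ≤
      2 * Real.exp (-(γ ^ 2 * C * K) / (12 * N)) :=
  stmt12_general N K C γ hγ0 hγ1 u v hu hv hu0 hv0 hratio
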